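/- Let X be a complex Banach space, U a bounded invertible operator on X, and A a nonzero bounded operator on X with U A U⁻¹ = γ A, where γ ∈ ℂ, |γ| = 1, and γ is not a root of unity. Let w be a bounded operator on X commuting with A and set T = w U. Assume there is a sequence of complex polynomials (p_k) with p_k(0) = 0 such that ‖w − p_k(A)‖ → 0 in operator norm. Then the sets σ(T) and σ_ap(T) are rotation invariant: if λ belongs to one of these sets and μ ∈ ℂ with |μ| = 1, then μλ belongs to the same set. -/

import Mathlib

/-!
Since `T A = γ A T`, the operator `A` maps approximate eigenvectors of `T` for `λ` to approximate
eigenvectors for `γ λ`, unless `A xₙ → 0`. In that case `w ≈ p_k(A) = q_k(A) A` and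
`A U = γ⁻¹ U A` force `T xₙ → 0`, so `λ = 0`. Hence the closed set `σ_ap(T)` is stable under
multiplication by `γ`, so by the closure of `{γⁿ}`, which is the whole unit circle. A circle
`|z| = |λ|` through a point of `σ(T)` either lies in `σ(T)` or crosses `∂σ(T) ⊆ σ_ap(T)`, and
rotating the crossing point inside `σ_ap(T)` covers the circle.
-/

open Filter Topology

/-- The approximate point spectrum of a bounded operator. -/
def approxPointSpectrum {X : Type*} [NormedAddCommGroup X] [NormedSpace ℂ X]
    (T : X →L[ℂ] X) : Set ℂ :=
  {l : ℂ | ∃ x : ℕ → X, (∀ n, ‖x n‖ = 1) ∧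
    Tendsto (fun n => ‖T (x n) - l • x n‖) atTop (nhds 0)}

/-- A subset of `ℂ` is rotation invariant if it is stable under multiplication by
unimodular numbers. -/
def RotationInvariant (s : Set ℂ) : Prop :=
  ∀ l ∈ s, ∀ μ : ℂ, ‖μ‖ = 1 → μ * l ∈ s

theorem Circle.denseRange_pow_of_orderOf_eq_zero {g : Circle} (hg : orderOf g = 0) :
    DenseRange (g ^ · : ℕ → Circle) := by
  rw [← denseRange_zpow_iff_pow]
  set e := AddCircle.homeomorphCircle one_ne_zero
  obtain ⟨a, rfl⟩ := e.surjective g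
  have ha : addOrderOf a = 0 := by
    rw [orderOf_eq_zero_iff'] at hg
    refine addOrderOf_eq_zero_iff'.2 fun n hn hna => hg n hn ?_
    rw [AddCircle.homeomorphCircle_apply, ← AddCircle.toCircle_nsmul, hna,
      AddCircle.toCircle_zero]
  have hcomp : (fun n : ℤ => e a ^ n) = e ∘ (· • a) := by
    ext1 n
    simp only [Function.comp_apply, e, AddCircle.homeomorphCircle_apply, AddCircle.toCircle_zsmul]
  rw [hcomp]
  exact e.surjective.denseRange.comp (AddCircle.denseRange_zsmul_iff.2 ha) e.continuous

theorem mem_closure_range_pow {γ μ : ℂ} (hγ : ‖γ‖ = 1) (hroot : ∀ n : ℕ, 1 ≤ n → γ ^ n ≠ 1)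
    (hμ : ‖μ‖ = 1) : μ ∈ closure (Set.range (γ ^ · : ℕ → ℂ)) := by
  let g : Circle := ⟨γ, mem_sphere_zero_iff_norm.2 hγ⟩
  let ν : Circle := ⟨μ, mem_sphere_zero_iff_norm.2 hμ⟩
  have hg : orderOf g = 0 := orderOf_eq_zero_iff'.2 fun n hn hgn =>
    hroot n hn (by simpa using congrArg ((↑) : Circle → ℂ) hgn)
  exact map_mem_closure (f := ((↑) : Circle → ℂ)) continuous_subtype_val
    (Circle.denseRange_pow_of_orderOf_eq_zero hg ν) (by rintro _ ⟨n, rfl⟩; exact ⟨n, rfl⟩)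

theorem RotationInvariant.of_isClosed_of_mul_mem {s : Set ℂ} (hs : IsClosed s) {γ : ℂ}
    (hγ : ‖γ‖ = 1) (hroot : ∀ n : ℕ, 1 ≤ n → γ ^ n ≠ 1) (hmul : ∀ l ∈ s, γ * l ∈ s) :
    RotationInvariant s := by
  intro l hl μ hμ
  have hpow : ∀ n : ℕ, γ ^ n * l ∈ s := by
    intro n
    induction n with
    | zero => simpa using hl
    | succ n ih => simpa [pow_succ', mul_assoc] using hmul _ ih
  have hclosed : IsClosed {c : ℂ | c * l ∈ s} := hs.preimage (continuous_mul_const l)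
  exact hclosed.closure_subset_iff.2 (Set.range_subset_iff.2 hpow)
    (mem_closure_range_pow hγ hroot hμ)

theorem IsPreconnected.subset_of_disjoint_frontier {X : Type*} [TopologicalSpace X]
    {c s : Set X} (hc : IsPreconnected c) (hcs : (c ∩ s).Nonempty)
    (hfront : Disjoint c (frontier s)) : c ⊆ s := by
  have hint : ∀ y ∈ c, y ∈ closure s → y ∈ interior s := fun y hyc hys => by
    by_contra hyi
    exact hfront.notMem_of_mem_left hyc ⟨hys, hyi⟩
  obtain ⟨x, hxc, hxs⟩ := hcs
  refine (hc.subset_of_closure_inter_subset isOpen_interior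
    ⟨x, hxc, hint x hxc (subset_closure hxs)⟩ ?_).trans interior_subset
  rintro y ⟨hy, hyc⟩
  exact hint y hyc (closure_mono interior_subset hy)

theorem RotationInvariant.of_frontier_subset {s t : Set ℂ} (hts : t ⊆ s)
    (hfront : frontier s ⊆ t) (ht : RotationInvariant t) : RotationInvariant s := by
  intro l hl μ hμ
  rcases eq_or_ne l 0 with rfl | hl0
  · simpa using hl
  have hμl : μ * l ∈ Metric.sphere (0 : ℂ) ‖l‖ := by simp [hμ]
  by_cases hdisj : Disjoint (Metric.sphere (0 : ℂ) ‖l‖) (frontier s)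
  · have hconn : IsPreconnected (Metric.sphere (0 : ℂ) ‖l‖) :=
      (isConnected_sphere (by simp [Complex.rank_real_complex]) 0 (norm_nonneg l)).isPreconnected
    exact hconn.subset_of_disjoint_frontier ⟨l, by simp, hl⟩ hdisj hμl
  obtain ⟨ν, hν, hνs⟩ := Set.not_disjoint_iff.1 hdisj
  rw [mem_sphere_zero_iff_norm] at hν hμl
  have hν0 : ν ≠ 0 := norm_ne_zero_iff.1 (hν ▸ norm_ne_zero_iff.2 hl0)
  rw [← div_mul_cancel₀ (μ * l) hν0]
  exact hts (ht ν (hfront hνs) _ (by rw [norm_div, hμl, hν, div_self (norm_ne_zero_iff.2 hl0)]))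

theorem spectrum.one_le_norm_inv_mul_norm_sub {𝕜 A : Type*} [NormedField 𝕜] [NormedRing A]
    [NormedAlgebra 𝕜 A] [CompleteSpace A] {a : A} {l z : 𝕜} (hl : l ∈ spectrum 𝕜 a) {u : Aˣ}
    (hu : (u : A) = algebraMap 𝕜 A z - a) : 1 ≤ ‖(↑u⁻¹ : A)‖ * ‖l - z‖ := by
  by_contra! h
  have hsmall : ‖-((l - z) • (↑u⁻¹ : A))‖ < 1 := by
    rw [norm_neg]
    exact (norm_smul_le _ _).trans_lt (by rwa [mul_comm])
  apply hl
  rw [spectrum.mem_resolventSet_iff]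
  convert u.isUnit.mul (Units.oneSub _ hsmall).isUnit using 1
  rw [Units.val_oneSub, sub_neg_eq_add, mul_add, mul_one, mul_smul_comm, u.mul_inv, hu,
    Algebra.algebraMap_eq_smul_one, Algebra.algebraMap_eq_smul_one, sub_smul]
  abel

theorem ContinuousLinearMap.tendsto_apply_zero_of_tendsto_opNorm_sub {𝕜 E F : Type*}
    [NontriviallyNormedField 𝕜] [SeminormedAddCommGroup E] [SeminormedAddCommGroup F]
    [NormedSpace 𝕜 E] [NormedSpace 𝕜 F] {w : E →L[𝕜] F} {S : ℕ → E →L[𝕜] F}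
    (hS : Tendsto (fun k => ‖w - S k‖) atTop (𝓝 0)) {y : ℕ → E} {C : ℝ} (hy : ∀ n, ‖y n‖ ≤ C)
    (hSy : ∀ k, Tendsto (fun n => S k (y n)) atTop (𝓝 0)) :
    Tendsto (fun n => w (y n)) atTop (𝓝 0) := by
  refine TendstoUniformly.tendsto_of_eventually_tendsto (F := fun k n => S k (y n))
    (L := fun _ => (0 : F)) (p := atTop) ?_ (.of_forall hSy) tendsto_const_nhds
  rw [Metric.tendstoUniformly_iff]
  intro ε hε
  have hSC : Tendsto (fun k => ‖w - S k‖ * C) atTop (𝓝 0) := by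
    simpa using hS.mul_const C
  filter_upwards [hSC.eventually_lt_const hε] with k hk n
  rw [dist_eq_norm, ← sub_apply]
  calc ‖(w - S k) (y n)‖ ≤ ‖w - S k‖ * ‖y n‖ := (w - S k).le_opNorm _
    _ ≤ ‖w - S k‖ * C := by gcongr; exact hy n
    _ < ε := hk

theorem ContinuousLinearMap.tendsto_aeval_apply_zero {𝕜 E : Type*} [NontriviallyNormedField 𝕜]
    [SeminormedAddCommGroup E] [NormedSpace 𝕜 E] {A : E →L[𝕜] E} {q : Polynomial 𝕜}
    (hq : q.eval 0 = 0) {y : ℕ → E} (hAy : Tendsto (fun n => A (y n)) atTop (𝓝 0)) :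
    Tendsto (fun n => Polynomial.aeval A q (y n)) atTop (𝓝 0) := by
  obtain ⟨r, rfl⟩ :=
    (Polynomial.X_dvd_iff (f := q)).2 (by rwa [Polynomial.coeff_zero_eq_eval_zero])
  rw [mul_comm]
  simpa [Function.comp_def] using ((Polynomial.aeval A r).continuous.tendsto 0).comp hAy

section ApproxPointSpectrum

variable {E : Type*} [NormedAddCommGroup E] [NormedSpace ℂ E]

theorem mem_approxPointSpectrum_iff (T : E →L[ℂ] E) (l : ℂ) :
    l ∈ approxPointSpectrum T ↔ ∀ ε > 0, ∃ x : E, x ≠ 0 ∧ ‖T x - l • x‖ ≤ ε * ‖x‖ := by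
  constructor
  · rintro ⟨x, hx, hlim⟩ ε hε
    obtain ⟨n, hn⟩ := (hlim.eventually_lt_const hε).exists
    exact ⟨x n, norm_ne_zero_iff.1 (by simp [hx]), by simpa [hx] using hn.le⟩
  · intro h
    choose x hx0 hx using fun n : ℕ => h (1 / (n + 1)) Nat.one_div_pos_of_nat
    have hnorm : ∀ n, ‖x n‖ ≠ 0 := fun n => norm_ne_zero_iff.2 (hx0 n)
    refine ⟨fun n => (‖x n‖⁻¹ : ℂ) • x n, fun n => by simp [norm_smul, hnorm n], ?_⟩
    refine squeeze_zero (fun _ => norm_nonneg _) (fun n => ?_)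
      tendsto_one_div_add_atTop_nhds_zero_nat
    rw [map_smul, smul_comm, ← smul_sub, norm_smul, norm_inv, Complex.norm_real, norm_norm,
      inv_mul_le_iff₀ (lt_of_le_of_ne (norm_nonneg _) (hnorm n).symm)]
    simpa [mul_comm] using hx n

theorem isClosed_approxPointSpectrum (T : E →L[ℂ] E) : IsClosed (approxPointSpectrum T) := by
  refine isClosed_of_closure_subset fun l hl => ?_
  rw [mem_approxPointSpectrum_iff]
  intro ε hε
  obtain ⟨l', hl', hll'⟩ := Metric.mem_closure_iff.1 hl (ε / 2) (half_pos hε)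
  obtain ⟨x, hx0, hx⟩ := (mem_approxPointSpectrum_iff T l').1 hl' (ε / 2) (half_pos hε)
  refine ⟨x, hx0, ?_⟩
  calc ‖T x - l • x‖ = ‖(T x - l' • x) + (l' - l) • x‖ := by rw [sub_smul]; abel_nf
    _ ≤ ‖T x - l' • x‖ + ‖l' - l‖ * ‖x‖ := (norm_add_le _ _).trans_eq (by rw [norm_smul])
    _ ≤ ε / 2 * ‖x‖ + ε / 2 * ‖x‖ := by
        gcongr
        rw [← dist_eq_norm, dist_comm]
        exact hll'.le
    _ = ε * ‖x‖ := by ring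

theorem approxPointSpectrum_subset_spectrum [CompleteSpace E] (T : E →L[ℂ] E) :
    approxPointSpectrum T ⊆ spectrum ℂ T := by
  rintro l ⟨x, hx, hlim⟩ hρ
  obtain ⟨u, hu⟩ := spectrum.mem_resolventSet_iff.1 hρ
  have hux : ∀ n, (↑u⁻¹ : E →L[ℂ] E) (l • x n - T (x n)) = x n := fun n => by
    rw [show l • x n - T (x n) = (u : E →L[ℂ] E) (x n) by simp [hu], ← mul_apply_eq_comp,
      u.inv_mul, one_apply_eq_self]
  have hlim' : Tendsto (fun n => l • x n - T (x n)) atTop (𝓝 0) :=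
    tendsto_zero_iff_norm_tendsto_zero.2 (by simpa only [norm_sub_rev] using hlim)
  have hx0 : Tendsto x atTop (𝓝 0) := by
    simpa [Function.comp_def, hux] using ((↑u⁻¹ : E →L[ℂ] E).continuous.tendsto 0).comp hlim'
  simpa [hx] using tendsto_zero_iff_norm_tendsto_zero.1 hx0

/-- Near a boundary point `l` of the spectrum there are resolvent points `z` with
`‖(z - T)⁻¹‖ ≥ 1 / |l - z|` large; vectors nearly attaining that norm are almost
eigenvectors for `l`. -/
theorem frontier_spectrum_subset_approxPointSpectrum [CompleteSpace E] (T : E →L[ℂ] E) :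
    frontier (spectrum ℂ T) ⊆ approxPointSpectrum T := by
  intro l hl
  have hlσ : l ∈ spectrum ℂ T := (spectrum.isClosed T).frontier_subset hl
  rw [mem_approxPointSpectrum_iff]
  intro ε hε
  rw [frontier_eq_closure_inter_closure] at hl
  obtain ⟨z, hzρ, hlz⟩ := Metric.mem_closure_iff.1 hl.2 (ε / 3) (by positivity)
  rw [dist_eq_norm] at hlz
  obtain ⟨u, hu⟩ := spectrum.notMem_iff.1 hzρ
  set R : E →L[ℂ] E := ↑u⁻¹
  have hR : 1 ≤ ‖R‖ * ‖l - z‖ := spectrum.one_le_norm_inv_mul_norm_sub hlσ hu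
  have hRpos : 0 < ‖R‖ := by
    by_contra! h
    linarith [mul_nonpos_of_nonpos_of_nonneg h (norm_nonneg (l - z))]
  obtain ⟨x, hx1, hRx⟩ := R.exists_lt_apply_of_lt_opNorm (half_lt_self hRpos)
  have hRx_pos : 0 < ‖R x‖ := lt_trans (by positivity) hRx
  have hresolvent : T (R x) - z • R x = -x := by
    rw [← neg_sub, show z • R x - T (R x) = (u : E →L[ℂ] E) (R x) by simp [hu],
      ← mul_apply_eq_comp, u.mul_inv, one_apply_eq_self]
  refine ⟨R x, norm_pos_iff.1 hRx_pos, ?_⟩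
  calc ‖T (R x) - l • R x‖ = ‖-x + (z - l) • R x‖ := by
        rw [← hresolvent, sub_smul]; abel_nf
    _ ≤ ‖x‖ + ‖l - z‖ * ‖R x‖ := by
        refine (norm_add_le _ _).trans_eq ?_
        rw [norm_neg, norm_smul, norm_sub_rev]
    _ ≤ 3 * ‖l - z‖ * ‖R x‖ := by nlinarith [norm_nonneg (l - z)]
    _ ≤ ε * ‖R x‖ := by gcongr; linarith

theorem eq_zero_of_tendsto_apply_zero {T : E →L[ℂ] E} {l : ℂ} {x : ℕ → E}
    (hx : ∀ n, ‖x n‖ = 1) (hlim : Tendsto (fun n => ‖T (x n) - l • x n‖) atTop (𝓝 0))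
    (hTx : Tendsto (fun n => T (x n)) atTop (𝓝 0)) : l = 0 := by
  have hlx : Tendsto (fun n => l • x n) atTop (𝓝 0) := by
    simpa using hTx.sub (tendsto_zero_iff_norm_tendsto_zero.2 hlim)
  simpa [norm_smul, hx] using tendsto_zero_iff_norm_tendsto_zero.1 hlx

theorem mul_mem_approxPointSpectrum_of_not_tendsto {T A : E →L[ℂ] E} {γ l : ℂ}
    (hTA : T * A = γ • (A * T)) {x : ℕ → E}
    (hlim : Tendsto (fun n => ‖T (x n) - l • x n‖) atTop (𝓝 0))
    (hAx : ¬Tendsto (fun n => A (x n)) atTop (𝓝 0)) : γ * l ∈ approxPointSpectrum T := by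
  obtain ⟨s, hs, hfreq⟩ := not_tendsto_iff_exists_frequently_notMem.1 hAx
  obtain ⟨δ, hδ, hball⟩ := Metric.mem_nhds_iff.1 hs
  rw [mem_approxPointSpectrum_iff]
  intro ε hε
  have hη : 0 < ε * δ / (‖γ‖ * ‖A‖ + 1) := by positivity
  obtain ⟨n, hAxn, hn⟩ := (hfreq.and_eventually (hlim.eventually_lt_const hη)).exists
  have hδAx : δ ≤ ‖A (x n)‖ := by
    simpa using fun h => hAxn (hball (mem_ball_zero_iff.2 h))
  have hcomm : T (A (x n)) - (γ * l) • A (x n) = γ • A (T (x n) - l • x n) := by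
    rw [← mul_apply_eq_comp, hTA, map_sub, map_smul, smul_sub, mul_smul]
    rfl
  refine ⟨A (x n), norm_pos_iff.1 (hδ.trans_le hδAx), ?_⟩
  rw [hcomm, norm_smul]
  calc ‖γ‖ * ‖A (T (x n) - l • x n)‖ ≤ ‖γ‖ * (‖A‖ * ‖T (x n) - l • x n‖) := by
        gcongr; exact A.le_opNorm _
    _ ≤ (‖γ‖ * ‖A‖ + 1) * ‖T (x n) - l • x n‖ := by nlinarith [norm_nonneg (T (x n) - l • x n)]
    _ ≤ (‖γ‖ * ‖A‖ + 1) * (ε * δ / (‖γ‖ * ‖A‖ + 1)) := by gcongr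
    _ = ε * δ := by field_simp
    _ ≤ ε * ‖A (x n)‖ := by gcongr

theorem tendsto_mul_apply_zero_of_tendsto_apply_zero {U A w : E →L[ℂ] E} {γ : ℂ} (hγ : γ ≠ 0)
    (hUA : U * A = γ • (A * U)) {p : ℕ → Polynomial ℂ} (hp0 : ∀ k, (p k).eval 0 = 0)
    (hconv : Tendsto (fun k => ‖w - Polynomial.aeval A (p k)‖) atTop (𝓝 0))
    {x : ℕ → E} (hx : ∀ n, ‖x n‖ = 1) (hAx : Tendsto (fun n => A (x n)) atTop (𝓝 0)) :
    Tendsto (fun n => (w * U) (x n)) atTop (𝓝 0) := by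
  have hAU : ∀ n, A (U (x n)) = γ⁻¹ • U (A (x n)) := fun n => by
    rw [← mul_apply_eq_comp U, hUA, smul_apply, smul_smul, inv_mul_cancel₀ hγ,
      one_smul, mul_apply_eq_comp]
  have hAUx : Tendsto (fun n => A (U (x n))) atTop (𝓝 0) := by
    simpa [hAU, Function.comp_def] using ((U.continuous.tendsto 0).comp hAx).const_smul γ⁻¹
  exact w.tendsto_apply_zero_of_tendsto_opNorm_sub hconv (C := ‖U‖)
    (fun n => by simpa [hx] using U.le_opNorm (x n))
    (fun k => ContinuousLinearMap.tendsto_aeval_apply_zero (hp0 k) hAUx)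

theorem mul_mem_approxPointSpectrum_of_mem {U A w : E →L[ℂ] E} {γ : ℂ} (hγ : γ ≠ 0)
    (hUA : U * A = γ • (A * U)) (hwA : w * A = A * w) {p : ℕ → Polynomial ℂ}
    (hp0 : ∀ k, (p k).eval 0 = 0)
    (hconv : Tendsto (fun k => ‖w - Polynomial.aeval A (p k)‖) atTop (𝓝 0))
    {l : ℂ} (hl : l ∈ approxPointSpectrum (w * U)) : γ * l ∈ approxPointSpectrum (w * U) := by
  obtain ⟨x, hx, hlim⟩ := id hl
  by_cases hAx : Tendsto (fun n => A (x n)) atTop (𝓝 0)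
  · rw [eq_zero_of_tendsto_apply_zero hx hlim
      (tendsto_mul_apply_zero_of_tendsto_apply_zero hγ hUA hp0 hconv hx hAx)] at hl ⊢
    rwa [mul_zero]
  · refine mul_mem_approxPointSpectrum_of_not_tendsto ?_ hlim hAx
    rw [mul_assoc, hUA, mul_smul_comm, ← mul_assoc, hwA, mul_assoc]

end ApproxPointSpectrum

theorem statement_5_general {X : Type*} [NormedAddCommGroup X] [NormedSpace ℂ X] [CompleteSpace X]
    (U V A w T : X →L[ℂ] X) (γ : ℂ)
    (hVU : V * U = 1)
    (hγ : ‖γ‖ = 1)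
    (hroot : ∀ n : ℕ, 1 ≤ n → γ ^ n ≠ 1)
    (hA : U * A * V = γ • A)
    (hwA : w * A = A * w)
    (hT : T = w * U)
    (p : ℕ → Polynomial ℂ)
    (hp0 : ∀ k, (p k).eval 0 = 0)
    (hconv : Tendsto (fun k => ‖w - Polynomial.aeval A (p k)‖) atTop (nhds 0)) :
    RotationInvariant (spectrum ℂ T) ∧ RotationInvariant (approxPointSpectrum T) := by
  subst hT
  have hγ0 : γ ≠ 0 := norm_ne_zero_iff.1 (by simp [hγ])
  have hUA : U * A = γ • (A * U) := by
    rw [← smul_mul_assoc, ← hA, mul_assoc _ V, hVU, mul_one]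
  have hap : RotationInvariant (approxPointSpectrum (w * U)) :=
    .of_isClosed_of_mul_mem (isClosed_approxPointSpectrum _) hγ hroot fun _ hl =>
      mul_mem_approxPointSpectrum_of_mem hγ0 hUA hwA hp0 hconv hl
  exact ⟨hap.of_frontier_subset (approxPointSpectrum_subset_spectrum _)
    (frontier_spectrum_subset_approxPointSpectrum _), hap⟩

theorem statement_5 {X : Type*} [NormedAddCommGroup X] [NormedSpace ℂ X] [CompleteSpace X]
    (U V A w T : X →L[ℂ] X) (γ : ℂ)
    (hUV : U * V = 1) (hVU : V * U = 1)
    (hA0 : A ≠ 0) (hγ : ‖γ‖ = 1)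
    (hroot : ∀ n : ℕ, 1 ≤ n → γ ^ n ≠ 1)
    (hA : U * A * V = γ • A)
    (hwA : w * A = A * w)
    (hT : T = w * U)
    (p : ℕ → Polynomial ℂ)
    (hp0 : ∀ k, (p k).eval 0 = 0)
    (hconv : Tendsto (fun k => ‖w - Polynomial.aeval A (p k)‖) atTop (nhds 0)) :
    RotationInvariant (spectrum ℂ T) ∧ RotationInvariant (approxPointSpectrum T) :=
  statement_5_general U V A w T γ hVU hγ hroot hA hwA hT p hp0 hconv
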